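/- arXiv:2001.05008 — 3 statements merged into one kernel-verified Lean document; each statement's English description precedes it below -/
import Mathlib

section
/- If the spectral localizer L_λ(A₁,A₂,A₃) has a zero eigenvalue, then there exists a unit vector v̂ ∈ ℂ^N such that ‖(Aⱼ - λⱼ)v̂‖ ≤ √3 · δ^{1/2} for each j ∈ {1,2,3}, where δ = max over pairs of ‖[Aᵢ,Aⱼ]‖. -/
open Matrix
open scoped Kronecker Matrix.Norms.L2Operator

noncomputable section

def pauli1 : Matrix (Fin 2) (Fin 2) ℂ := !![0, 1; 1, 0]
def pauli2 : Matrix (Fin 2) (Fin 2) ℂ := !![0, -Complex.I; Complex.I, 0]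
def pauli3 : Matrix (Fin 2) (Fin 2) ℂ := !![1, 0; 0, -1]

def localizer {N : ℕ} (A₁ A₂ A₃ : Matrix (Fin N) (Fin N) ℂ) (lam : Fin 3 → ℝ) :
    Matrix (Fin 2 × Fin N) (Fin 2 × Fin N) ℂ :=
  pauli1 ⊗ₖ (A₁ - (lam 0 : ℂ) • 1) + pauli2 ⊗ₖ (A₂ - (lam 1 : ℂ) • 1)
    + pauli3 ⊗ₖ (A₃ - (lam 2 : ℂ) • 1)

/-!
Write `Bⱼ = Aⱼ - λⱼ` and split a kernel vector of the localizer into its spinor components `x, y`: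
the kernel equation says `B₃x + B₁y - iB₂y = 0` and `B₁x + iB₂x - B₃y = 0`. Adding the squared
norms of the two left-hand sides (that is, writing out `⟪u, L²u⟫ = 0`), the diagonal terms give
`∑ⱼ (‖Bⱼx‖² + ‖Bⱼy‖²)`, and since the `Bⱼ` are self-adjoint the cross terms pair up into matrix
elements of commutators `[Bᵢ, Bⱼ] = [Aᵢ, Aⱼ]`, of total size at most
`δ (‖x‖² + 4‖x‖‖y‖ + ‖y‖²) ≤ 3δ (‖x‖² + ‖y‖²)`. Hence one nonzero component `v` has
`∑ⱼ ‖Bⱼv‖² ≤ 3δ‖v‖²`, and `v / ‖v‖` is the approximate joint eigenvector.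
-/

open Complex
open scoped InnerProductSpace

theorem exists_ne_zero_le_of_add_le {E : Type*} [NormedAddCommGroup E] {f : E → ℝ} (hf : f 0 = 0)
    {c : ℝ} {x y : E} (hxy : x ≠ 0 ∨ y ≠ 0) (h : f x + f y ≤ c * (‖x‖ ^ 2 + ‖y‖ ^ 2)) :
    ∃ v ≠ 0, f v ≤ c * ‖v‖ ^ 2 := by
  by_cases hx : x = 0
  · subst hx
    exact ⟨y, hxy.resolve_left (not_not.mpr rfl), by simpa [hf] using h⟩
  by_cases hy : y = 0
  · subst hy
    exact ⟨x, hx, by simpa [hf] using h⟩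
  by_cases hfx : f x ≤ c * ‖x‖ ^ 2
  · exact ⟨x, hx, hfx⟩
  · exact ⟨y, hy, by linarith⟩

theorem exists_norm_eq_one_forall_norm_apply_le {𝕜 E ι : Type*} [RCLike 𝕜] [NormedAddCommGroup E]
    [NormedSpace 𝕜 E] [Fintype ι] (T : ι → E →L[𝕜] E) {c : ℝ} {v : E} (hv : v ≠ 0)
    (h : ∑ j, ‖T j v‖ ^ 2 ≤ c * ‖v‖ ^ 2) :
    ∃ w : E, ‖w‖ = 1 ∧ ∀ j, ‖T j w‖ ≤ √c := by
  have hv' : 0 < ‖v‖ := norm_pos_iff.mpr hv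
  refine ⟨(‖v‖⁻¹ : 𝕜) • v, by simp [norm_smul, hv'.ne'], fun j => ?_⟩
  have hj : ‖T j v‖ ^ 2 ≤ c * ‖v‖ ^ 2 :=
    (Finset.single_le_sum (fun i _ => sq_nonneg ‖T i v‖) (Finset.mem_univ j)).trans h
  refine abs_of_nonneg (norm_nonneg (T j _)) ▸ Real.abs_le_sqrt ?_
  rw [map_smul, norm_smul, mul_pow, norm_inv, RCLike.norm_ofReal, abs_of_pos hv', inv_pow,
    inv_mul_le_iff₀ (by positivity)]
  linarith

section

variable {E : Type*} [NormedAddCommGroup E] [InnerProductSpace ℂ E]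

theorem inner_apply_sub_inner_apply_eq_inner_lie {S T : E →L[ℂ] E}
    (hS : (S : E →ₗ[ℂ] E).IsSymmetric) (hT : (T : E →ₗ[ℂ] E).IsSymmetric) (x y : E) :
    ⟪S x, T y⟫_ℂ - ⟪T x, S y⟫_ℂ = ⟪x, ⁅S, T⁆ y⟫_ℂ := by
  have hS' := hS x
  have hT' := hT x
  simp only [ContinuousLinearMap.coe_coe] at hS' hT'
  rw [hS', hT', Ring.lie_def, _root_.sub_apply, mul_apply_eq_comp, mul_apply_eq_comp,
    inner_sub_right]

theorem norm_inner_apply_sub_inner_apply_le {S T : E →L[ℂ] E}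
    (hS : (S : E →ₗ[ℂ] E).IsSymmetric) (hT : (T : E →ₗ[ℂ] E).IsSymmetric) (x y : E) :
    ‖⟪S x, T y⟫_ℂ - ⟪T x, S y⟫_ℂ‖ ≤ ‖⁅S, T⁆‖ * ‖x‖ * ‖y‖ := by
  rw [inner_apply_sub_inner_apply_eq_inner_lie hS hT, mul_assoc, mul_left_comm]
  exact (norm_inner_le_norm _ _).trans (by gcongr; exact ⁅S, T⁆.le_opNorm y)

theorem abs_im_inner_apply_le {S T : E →L[ℂ] E}
    (hS : (S : E →ₗ[ℂ] E).IsSymmetric) (hT : (T : E →ₗ[ℂ] E).IsSymmetric) (x : E) :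
    |(⟪S x, T x⟫_ℂ).im| ≤ ‖⁅S, T⁆‖ * ‖x‖ ^ 2 / 2 := by
  have h := norm_inner_apply_sub_inner_apply_le hS hT x x
  rw [← inner_conj_symm (T x), Complex.sub_conj, norm_mul, Complex.norm_I, mul_one,
    Complex.norm_real, Real.norm_eq_abs, abs_mul, abs_two] at h
  linarith

theorem sum_norm_sq_le_of_pauli_eqs {T : Fin 3 → E →L[ℂ] E}
    (hT : ∀ j, (T j : E →ₗ[ℂ] E).IsSymmetric) {δ : ℝ} (hδ : ∀ i j, ‖⁅T i, T j⁆‖ ≤ δ) {x y : E}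
    (h₀ : T 2 x + T 0 y - I • T 1 y = 0) (h₁ : T 0 x + I • T 1 x - T 2 y = 0) :
    ∑ j, ‖T j x‖ ^ 2 + ∑ j, ‖T j y‖ ^ 2 ≤ 3 * δ * (‖x‖ ^ 2 + ‖y‖ ^ 2) := by
  have expand : ‖T 2 x + T 0 y - I • T 1 y‖ ^ 2 + ‖T 0 x + I • T 1 x - T 2 y‖ ^ 2 =
      ∑ j, ‖T j x‖ ^ 2 + ∑ j, ‖T j y‖ ^ 2
        + 2 * (⟪T 2 x, T 0 y⟫_ℂ - ⟪T 0 x, T 2 y⟫_ℂ).re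
        + 2 * (⟪T 2 x, T 1 y⟫_ℂ - ⟪T 1 x, T 2 y⟫_ℂ).im
        + 2 * (⟪T 0 y, T 1 y⟫_ℂ).im - 2 * (⟪T 0 x, T 1 x⟫_ℂ).im := by
    simp only [norm_add_sq (𝕜 := ℂ), norm_sub_sq (𝕜 := ℂ), inner_add_left, inner_smul_left,
      inner_smul_right, norm_smul, norm_I, one_mul, Fin.sum_univ_three, RCLike.re_to_complex,
      conj_I, neg_mul, add_re, add_im, neg_re, I_mul_re, sub_re, sub_im]
    ring
  have hre : |(⟪T 2 x, T 0 y⟫_ℂ - ⟪T 0 x, T 2 y⟫_ℂ).re| ≤ δ * ‖x‖ * ‖y‖ :=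
    (Complex.abs_re_le_norm _).trans <|
      (norm_inner_apply_sub_inner_apply_le (hT 2) (hT 0) x y).trans (by gcongr; exact hδ 2 0)
  have him : |(⟪T 2 x, T 1 y⟫_ℂ - ⟪T 1 x, T 2 y⟫_ℂ).im| ≤ δ * ‖x‖ * ‖y‖ :=
    (Complex.abs_im_le_norm _).trans <|
      (norm_inner_apply_sub_inner_apply_le (hT 2) (hT 1) x y).trans (by gcongr; exact hδ 2 1)
  have himx : |(⟪T 0 x, T 1 x⟫_ℂ).im| ≤ δ * ‖x‖ ^ 2 / 2 :=
    (abs_im_inner_apply_le (hT 0) (hT 1) x).trans (by gcongr; exact hδ 0 1)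
  have himy : |(⟪T 0 y, T 1 y⟫_ℂ).im| ≤ δ * ‖y‖ ^ 2 / 2 :=
    (abs_im_inner_apply_le (hT 0) (hT 1) y).trans (by gcongr; exact hδ 0 1)
  have hδ0 : 0 ≤ δ := (norm_nonneg _).trans (hδ 0 0)
  have amgm : 2 * ‖x‖ * ‖y‖ ≤ ‖x‖ ^ 2 + ‖y‖ ^ 2 := by nlinarith [sq_nonneg (‖x‖ - ‖y‖)]
  rw [h₀, h₁, norm_zero, zero_pow two_ne_zero, add_zero] at expand
  linarith [abs_le.mp hre, abs_le.mp him, abs_le.mp himx, abs_le.mp himy,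
    mul_le_mul_of_nonneg_left amgm hδ0]

theorem exists_approx_joint_eigenvector_of_pauli_eqs {T : Fin 3 → E →L[ℂ] E}
    (hT : ∀ j, (T j : E →ₗ[ℂ] E).IsSymmetric) {δ : ℝ} (hδ : ∀ i j, ‖⁅T i, T j⁆‖ ≤ δ) {x y : E}
    (hxy : x ≠ 0 ∨ y ≠ 0) (h₀ : T 2 x + T 0 y - I • T 1 y = 0)
    (h₁ : T 0 x + I • T 1 x - T 2 y = 0) :
    ∃ w : E, ‖w‖ = 1 ∧ ∀ j, ‖T j w‖ ≤ √(3 * δ) := by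
  obtain ⟨v, hv, hvT⟩ := exists_ne_zero_le_of_add_le (f := fun v => ∑ j, ‖T j v‖ ^ 2)
    (by simp) hxy (sum_norm_sq_le_of_pauli_eqs hT hδ h₀ h₁)
  exact exists_norm_eq_one_forall_norm_apply_le T hv hvT

end

theorem kronecker_mulVec_apply {R l m n p : Type*} [Semiring R] [Fintype m] [Fintype p]
    (M : Matrix l m R) (C : Matrix n p R) (u : m × p → R) (i : l) (k : n) :
    (M ⊗ₖ C *ᵥ u) (i, k) = ∑ i', M i i' * (C *ᵥ Function.curry u i') k := by
  simp [mulVec, dotProduct, Fintype.sum_prod_type, Finset.mul_sum, mul_assoc]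

theorem pauli_kronecker_mulVec_eq_zero_iff {n : Type*} [Fintype n] (M₁ M₂ M₃ : Matrix n n ℂ)
    (u : Fin 2 × n → ℂ) :
    (pauli1 ⊗ₖ M₁ + pauli2 ⊗ₖ M₂ + pauli3 ⊗ₖ M₃) *ᵥ u = 0 ↔
      M₃ *ᵥ Function.curry u 0 + M₁ *ᵥ Function.curry u 1 - I • M₂ *ᵥ Function.curry u 1 = 0 ∧
      M₁ *ᵥ Function.curry u 0 + I • M₂ *ᵥ Function.curry u 0 - M₃ *ᵥ Function.curry u 1 = 0 := by
  simp only [pauli1, pauli2, pauli3, funext_iff, Prod.forall, Fin.forall_fin_two, add_mulVec,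
    Pi.add_apply, Pi.sub_apply, Pi.smul_apply, Pi.zero_apply, kronecker_mulVec_apply,
    Fin.sum_univ_two, of_apply, cons_val', cons_val_fin_one, cons_val_zero, cons_val_one, zero_mul,
    one_mul, zero_add, add_zero, smul_eq_mul]
  exact and_congr (forall_congr' fun k => by ring_nf) (forall_congr' fun k => by ring_nf)

theorem lie_sub_smul_one_sub_smul_one {R A : Type*} [CommRing R] [Ring A] [Algebra R A]
    (a b : A) (r s : R) : ⁅a - r • 1, b - s • 1⁆ = ⁅a, b⁆ := by
  simp only [Ring.lie_def, sub_mul, mul_sub, smul_mul_assoc, mul_smul_comm, one_mul, mul_one]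
  module

/-- If the spectral localizer has a zero eigenvalue, there is an approximate joint
eigenvector of the pairwise δ-commuting Hermitian matrices `A j` with eigenvalues `lam j`. -/
theorem approx_joint_eigenvector_of_localizer_kernel {N : ℕ}
    (A : Fin 3 → Matrix (Fin N) (Fin N) ℂ) (hA : ∀ j, (A j).IsHermitian)
    (δ : ℝ) (hδ : ∀ i j, ‖⁅A i, A j⁆‖ ≤ δ)
    (lam : Fin 3 → ℝ)
    (hker : ∃ u : Fin 2 × Fin N → ℂ, u ≠ 0 ∧
      (localizer (A 0) (A 1) (A 2) lam).mulVec u = 0) :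
    ∃ v : EuclideanSpace ℂ (Fin N), ‖v‖ = 1 ∧
      ∀ j, ‖((WithLp.equiv 2 (Fin N → ℂ)).symm
          ((A j - (lam j : ℂ) • 1).mulVec v))‖ ≤ Real.sqrt 3 * δ ^ ((1 : ℝ)/2) := by
  obtain ⟨u, hu, hLu⟩ := hker
  obtain ⟨h₀, h₁⟩ := (pauli_kronecker_mulVec_eq_zero_iff _ _ _ u).mp hLu
  let T j := toEuclideanCLM (𝕜 := ℂ) (n := Fin N) (A j - (lam j : ℂ) • 1)
  have hT j : (T j : EuclideanSpace ℂ (Fin N) →ₗ[ℂ] _).IsSymmetric :=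
    isSymmetric_toEuclideanLin_iff.mpr ((hA j).sub (isHermitian_one.smul (conj_ofReal _)))
  have hδT i j : ‖⁅T i, T j⁆‖ ≤ δ := by
    have hTA : ⁅T i, T j⁆ = toEuclideanCLM (𝕜 := ℂ) (n := Fin N)
        ⁅A i - (lam i : ℂ) • 1, A j - (lam j : ℂ) • 1⁆ := by
      rw [Ring.lie_def, Ring.lie_def, map_sub, map_mul, map_mul]
    rw [hTA, ← cstar_norm_def, lie_sub_smul_one_sub_smul_one]
    exact hδ i j
  have hxy : WithLp.toLp 2 (Function.curry u 0) ≠ 0 ∨ WithLp.toLp 2 (Function.curry u 1) ≠ 0 := by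
    contrapose! hu
    simp only [WithLp.toLp_eq_zero] at hu
    ext ⟨i, k⟩
    fin_cases i
    exacts [congrFun hu.1 k, congrFun hu.2 k]
  obtain ⟨w, hw, hwT⟩ := exists_approx_joint_eigenvector_of_pauli_eqs hT hδT hxy
    (congrArg (WithLp.toLp 2) h₀) (congrArg (WithLp.toLp 2) h₁)
  refine ⟨w, hw, fun j => ?_⟩
  rw [← Real.sqrt_eq_rpow, ← Real.sqrt_mul zero_le_three]
  exact hwT j
end
end

section
/- Suppose Δ ≠ 0 and t ≠ 0. Then there exist k₁, k₂ ∈ [0,2π) with E_+(k₁,k₂) = E_-(k₁,k₂) (a band touching) if and only if μ/(2t) ∈ {-2, 0, 2}. -/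
/-! Since `E₋ = -E₊`, the bands touch exactly where the radicand of `E₊` vanishes. For `Δ' ≠ 0` this forces
`sin k₁ = sin k₂ = 0`, so `cos kᵢ = ±1`, and then `μ' = -(cos k₁ + cos k₂) ∈ {-2, 0, 2}`; conversely
`k = 0` and `k = π` realise each of these values. -/

noncomputable section

/-- The Bloch band functions of the p_x + i p_y model. -/
def bandPlus (t Δ' μ' k₁ k₂ : ℝ) : ℝ :=
  2 * |t| * Real.sqrt (Δ' ^ 2 * Real.sin k₁ ^ 2 + Δ' ^ 2 * Real.sin k₂ ^ 2
    + (μ' + Real.cos k₁ + Real.cos k₂) ^ 2)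

def bandMinus (t Δ' μ' k₁ k₂ : ℝ) : ℝ := - bandPlus t Δ' μ' k₁ k₂

open Real Set

lemma bandPlus_eq_zero_iff {t Δ' : ℝ} (ht : t ≠ 0) (hΔ' : Δ' ≠ 0) (μ' k₁ k₂ : ℝ) :
    bandPlus t Δ' μ' k₁ k₂ = 0 ↔ sin k₁ = 0 ∧ sin k₂ = 0 ∧ μ' + cos k₁ + cos k₂ = 0 := by
  have hΔ'sq : Δ' ^ 2 ≠ 0 := pow_ne_zero 2 hΔ'
  rw [bandPlus, mul_eq_zero, or_iff_right (by positivity), sqrt_eq_zero (by positivity),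
    add_eq_zero_iff_of_nonneg (by positivity) (by positivity),
    add_eq_zero_iff_of_nonneg (by positivity) (by positivity)]
  simp only [mul_eq_zero, hΔ'sq, false_or, pow_eq_zero_iff two_ne_zero, and_assoc]

lemma bandPlus_eq_bandMinus_iff {t Δ' : ℝ} (ht : t ≠ 0) (hΔ' : Δ' ≠ 0) (μ' k₁ k₂ : ℝ) :
    bandPlus t Δ' μ' k₁ k₂ = bandMinus t Δ' μ' k₁ k₂ ↔
      (cos k₁ = 1 ∨ cos k₁ = -1) ∧ (cos k₂ = 1 ∨ cos k₂ = -1) ∧ μ' + cos k₁ + cos k₂ = 0 := by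
  rw [bandMinus, self_eq_neg, bandPlus_eq_zero_iff ht hΔ', sin_eq_zero_iff_cos_eq,
    sin_eq_zero_iff_cos_eq]

/-- For `Δ ≠ 0` and `t ≠ 0`, band touchings occur iff `μ/(2t) ∈ {-2, 0, 2}`. -/
theorem band_touching_iff (μ t Δ : ℝ) (hΔ : Δ ≠ 0) (ht : t ≠ 0) :
    (∃ k₁ ∈ Set.Ico (0 : ℝ) (2 * Real.pi), ∃ k₂ ∈ Set.Ico (0 : ℝ) (2 * Real.pi),
      bandPlus t (Δ / (2 * t)) (μ / (2 * t)) k₁ k₂ =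
        bandMinus t (Δ / (2 * t)) (μ / (2 * t)) k₁ k₂) ↔
      μ / (2 * t) ∈ ({-2, 0, 2} : Set ℝ) := by
  have hΔ' : Δ / (2 * t) ≠ 0 := div_ne_zero hΔ (mul_ne_zero two_ne_zero ht)
  simp only [bandPlus_eq_bandMinus_iff ht hΔ', mem_insert_iff, mem_singleton_iff]
  constructor
  · rintro ⟨k₁, -, k₂, -, h₁ | h₁, h₂ | h₂, hsum⟩ <;> rw [h₁, h₂] at hsum
    · exact .inl (by linarith)
    · exact .inr (.inl (by linarith))
    · exact .inr (.inl (by linarith))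
    · exact .inr (.inr (by linarith))
  · have h0 : (0 : ℝ) ∈ Ico 0 (2 * π) := ⟨le_rfl, by positivity⟩
    have hπ : π ∈ Ico 0 (2 * π) := ⟨pi_pos.le, by linarith [pi_pos]⟩
    rintro (h | h | h)
    · exact ⟨0, h0, 0, h0, by simp [h]; norm_num⟩
    · exact ⟨0, h0, π, hπ, by simp [h]⟩
    · exact ⟨π, hπ, π, hπ, by simp [h]; norm_num⟩
end
end

section
/- Every eigenvalue of L_λ(A₁,A₂,A₃)² is at least (smallest eigenvalue of (A₁-λ₁)² + (A₂-λ₂)² + (A₃-λ₃)²) minus (‖[A₁,A₂]‖ + ‖[A₂,A₃]‖ + ‖[A₃,A₁]‖). -/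
open Matrix
open scoped Kronecker Matrix.Norms.L2Operator

noncomputable section

/-!
The Pauli relations give `L_λ² = 1 ⊗ B + K` with `B = Σ (Aⱼ - λⱼ)²` and
`K = σ₁ ⊗ i[A₂, A₃] + σ₂ ⊗ i[A₃, A₁] + σ₃ ⊗ i[A₁, A₂]` self-adjoint (the scalar shifts drop out of
the commutators). In the Loewner order `B ≥ μ` for `μ` the smallest eigenvalue of `B`, so
`1 ⊗ B ≥ μ`, while `K ≥ -‖K‖`; hence `L_λ² ≥ μ - ‖K‖` and every eigenvalue of `L_λ²` is at least
`μ - ‖K‖`. Finally `‖σⱼ ⊗ D‖ ≤ ‖D‖`: the maps `A ↦ A ⊗ 1` and `D ↦ 1 ⊗ D` are star homomorphisms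
of C⋆-algebras, hence contractive, and the Pauli matrices are unitary.
-/

open scoped MatrixOrder ComplexOrder

theorem sub_norm_le_of_mem_spectrum_add {A : Type*} [CStarAlgebra A] [PartialOrder A]
    [StarOrderedRing A] {a b : A} {r x : ℝ} (ha : IsSelfAdjoint a) (hb : IsSelfAdjoint b)
    (hr : algebraMap ℝ A r ≤ a) (hx : x ∈ spectrum ℝ (a + b)) : r - ‖b‖ ≤ x := by
  refine (algebraMap_le_iff_le_spectrum (ha.add hb)).1 ?_ x hx
  rw [map_sub, sub_eq_add_neg]
  exact add_le_add hr hb.neg_algebraMap_norm_le_self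

theorem lie_sub_smul_one {R A : Type*} [CommRing R] [Ring A] [Algebra R A] (x y : A) (a b : R) :
    ⁅x - a • 1, y - b • 1⁆ = ⁅x, y⁆ := by
  simp only [Ring.lie_def, sub_mul, mul_sub, smul_mul_assoc, mul_smul_comm, one_mul, mul_one]
  module

namespace Matrix

section Kronecker

variable {α l m n p : Type*}

theorem kronecker_sub [NonUnitalNonAssocRing α] (A : Matrix l m α) (B C : Matrix n p α) :
    A ⊗ₖ (B - C) = A ⊗ₖ B - A ⊗ₖ C := by
  ext
  simp [mul_sub]

theorem IsHermitian.kronecker [CommSemiring α] [StarRing α] {A : Matrix m m α}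
    {B : Matrix n n α} (hA : A.IsHermitian) (hB : B.IsHermitian) : (A ⊗ₖ B).IsHermitian := by
  rw [IsHermitian, conjTranspose_kronecker, hA.eq, hB.eq]

end Kronecker

section Hermitian

variable {n : Type*}

theorem IsHermitian.sub_ofReal_smul_one [DecidableEq n] {A : Matrix n n ℂ} (hA : A.IsHermitian)
    (r : ℝ) : (A - (r : ℂ) • 1).IsHermitian :=
  hA.sub <| by simp [IsHermitian, conjTranspose_smul]

theorem IsHermitian.I_smul_lie [Fintype n] {A B : Matrix n n ℂ} (hA : A.IsHermitian)
    (hB : B.IsHermitian) : (Complex.I • ⁅A, B⁆).IsHermitian := by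
  rw [IsHermitian, conjTranspose_smul, Ring.lie_def, conjTranspose_sub, conjTranspose_mul,
    conjTranspose_mul, hA.eq, hB.eq, Complex.star_def, Complex.conj_I, neg_smul, ← smul_neg,
    neg_sub]

end Hermitian

variable {m n : Type*} [Fintype m] [DecidableEq m] [Fintype n] [DecidableEq n]

theorem mem_spectrum_real_of_mulVec_eq_smul {M : Matrix n n ℂ} {v : n → ℂ} {c : ℝ} (hv : v ≠ 0)
    (h : M *ᵥ v = (c : ℂ) • v) : c ∈ spectrum ℝ M := by
  rw [spectrum.mem_iff, isUnit_iff_isUnit_det, isUnit_iff_ne_zero, not_not]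
  by_contra hdet
  refine hv (eq_zero_of_mulVec_eq_zero hdet ?_)
  rw [sub_mulVec, h, Algebra.algebraMap_eq_smul_one, smul_mulVec, one_mulVec, Complex.coe_smul,
    sub_self]

theorem IsHermitian.algebraMap_sInf_le {B : Matrix n n ℂ} (hB : B.IsHermitian) :
    algebraMap ℝ _ (sInf {c : ℝ | ∃ v, v ≠ 0 ∧ B *ᵥ v = (c : ℂ) • v}) ≤ B := by
  have hS : {c : ℝ | ∃ v, v ≠ 0 ∧ B *ᵥ v = (c : ℂ) • v} ⊆ spectrum ℝ B :=
    fun c ⟨v, hv, h⟩ => mem_spectrum_real_of_mulVec_eq_smul hv h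
  rw [algebraMap_le_iff_le_spectrum hB, hB.spectrum_real_eq_range_eigenvalues]
  rintro _ ⟨i, rfl⟩
  refine csInf_le ((hB.spectrum_real_eq_range_eigenvalues ▸ Set.finite_range _).bddBelow.mono hS)
    ⟨_, hB.eigenvectorBasis.orthonormal.ne_zero i ∘ (WithLp.ofLp_eq_zero 2).1, ?_⟩
  rw [hB.mulVec_eigenvectorBasis, Complex.coe_smul]

theorem algebraMap_le_one_kronecker {B : Matrix n n ℂ} {r : ℝ} (h : algebraMap ℝ _ r ≤ B) :
    algebraMap ℝ _ r ≤ (1 : Matrix m m ℂ) ⊗ₖ B := by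
  rw [le_iff] at h ⊢
  have := (PosSemidef.one (n := m) (R := ℂ)).kronecker h
  rwa [kronecker_sub, Algebra.algebraMap_eq_smul_one, kronecker_smul, one_kronecker_one,
    ← Algebra.algebraMap_eq_smul_one] at this

variable (m n) in
def oneKroneckerStarAlgHom : Matrix n n ℂ →⋆ₐ[ℂ] Matrix (m × n) (m × n) ℂ where
  toFun B := 1 ⊗ₖ B
  map_one' := one_kronecker_one
  map_mul' A B := by rw [← mul_kronecker_mul, mul_one]
  map_zero' := kronecker_zero _
  map_add' := kronecker_add _
  commutes' r := by
    rw [Algebra.algebraMap_eq_smul_one, kronecker_smul, one_kronecker_one,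
      ← Algebra.algebraMap_eq_smul_one]
  map_star' B := by
    rw [star_eq_conjTranspose, star_eq_conjTranspose, conjTranspose_kronecker, conjTranspose_one]

variable (m n) in
def kroneckerOneStarAlgHom : Matrix m m ℂ →⋆ₐ[ℂ] Matrix (m × n) (m × n) ℂ where
  toFun A := A ⊗ₖ 1
  map_one' := one_kronecker_one
  map_mul' A B := by rw [← mul_kronecker_mul, mul_one]
  map_zero' := zero_kronecker _
  map_add' A B := add_kronecker _ _ _
  commutes' r := by
    rw [Algebra.algebraMap_eq_smul_one, smul_kronecker, one_kronecker_one,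
      ← Algebra.algebraMap_eq_smul_one]
  map_star' A := by
    rw [star_eq_conjTranspose, star_eq_conjTranspose, conjTranspose_kronecker, conjTranspose_one]

theorem norm_kronecker_le (A : Matrix m m ℂ) (B : Matrix n n ℂ) : ‖A ⊗ₖ B‖ ≤ ‖A‖ * ‖B‖ :=
  calc ‖A ⊗ₖ B‖ = ‖kroneckerOneStarAlgHom m n A * oneKroneckerStarAlgHom m n B‖ := by
        change _ = ‖(A ⊗ₖ 1) * (1 ⊗ₖ B)‖
        rw [← mul_kronecker_mul, mul_one, one_mul]
    _ ≤ ‖A‖ * ‖B‖ := (norm_mul_le _ _).trans <| mul_le_mul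
        (NonUnitalStarAlgHom.norm_apply_le _ A) (NonUnitalStarAlgHom.norm_apply_le _ B)
        (norm_nonneg _) (norm_nonneg _)

theorem norm_eq_one_of_isHermitian_of_mul_self_eq_one [Nonempty n] {M : Matrix n n ℂ}
    (hM : M.IsHermitian) (h : M * M = 1) : ‖M‖ = 1 :=
  CStarRing.norm_of_mem_unitary <| Unitary.mem_iff.2 <| by
    rw [star_eq_conjTranspose, hM.eq]
    exact ⟨h, h⟩

end Matrix

theorem isHermitian_pauli1 : pauli1.IsHermitian := by
  ext i j; fin_cases i <;> fin_cases j <;> simp [pauli1]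

theorem isHermitian_pauli2 : pauli2.IsHermitian := by
  ext i j; fin_cases i <;> fin_cases j <;> simp [pauli2]

theorem isHermitian_pauli3 : pauli3.IsHermitian := by
  ext i j; fin_cases i <;> fin_cases j <;> simp [pauli3]

theorem pauli1_mul_self : pauli1 * pauli1 = 1 := by
  ext i j; fin_cases i <;> fin_cases j <;> simp [pauli1]

theorem pauli2_mul_self : pauli2 * pauli2 = 1 := by
  ext i j; fin_cases i <;> fin_cases j <;> simp [pauli2]

theorem pauli3_mul_self : pauli3 * pauli3 = 1 := by
  ext i j; fin_cases i <;> fin_cases j <;> simp [pauli3]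

theorem pauli1_mul_pauli2 : pauli1 * pauli2 = Complex.I • pauli3 := by
  ext i j; fin_cases i <;> fin_cases j <;> simp [pauli1, pauli2, pauli3]

theorem pauli2_mul_pauli1 : pauli2 * pauli1 = -Complex.I • pauli3 := by
  ext i j; fin_cases i <;> fin_cases j <;> simp [pauli1, pauli2, pauli3]

theorem pauli2_mul_pauli3 : pauli2 * pauli3 = Complex.I • pauli1 := by
  ext i j; fin_cases i <;> fin_cases j <;> simp [pauli1, pauli2, pauli3]

theorem pauli3_mul_pauli2 : pauli3 * pauli2 = -Complex.I • pauli1 := by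
  ext i j; fin_cases i <;> fin_cases j <;> simp [pauli1, pauli2, pauli3]

theorem pauli3_mul_pauli1 : pauli3 * pauli1 = Complex.I • pauli2 := by
  ext i j; fin_cases i <;> fin_cases j <;> simp [pauli1, pauli2, pauli3]

theorem pauli1_mul_pauli3 : pauli1 * pauli3 = -Complex.I • pauli2 := by
  ext i j; fin_cases i <;> fin_cases j <;> simp [pauli1, pauli2, pauli3]

section PauliKronecker

variable {n : Type*} [Fintype n]

def pauliCommutatorTerm (X₁ X₂ X₃ : Matrix n n ℂ) : Matrix (Fin 2 × n) (Fin 2 × n) ℂ :=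
  pauli1 ⊗ₖ (Complex.I • ⁅X₂, X₃⁆) + pauli2 ⊗ₖ (Complex.I • ⁅X₃, X₁⁆)
    + pauli3 ⊗ₖ (Complex.I • ⁅X₁, X₂⁆)

theorem pauli_kronecker_sum_mul_self [DecidableEq n] (X₁ X₂ X₃ : Matrix n n ℂ) :
    (pauli1 ⊗ₖ X₁ + pauli2 ⊗ₖ X₂ + pauli3 ⊗ₖ X₃) * (pauli1 ⊗ₖ X₁ + pauli2 ⊗ₖ X₂ + pauli3 ⊗ₖ X₃)
      = 1 ⊗ₖ (X₁ ^ 2 + X₂ ^ 2 + X₃ ^ 2) + pauliCommutatorTerm X₁ X₂ X₃ := by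
  simp only [pauliCommutatorTerm, Ring.lie_def, add_mul, mul_add, ← mul_kronecker_mul,
    pauli1_mul_self, pauli2_mul_self, pauli3_mul_self, pauli1_mul_pauli2, pauli2_mul_pauli1,
    pauli2_mul_pauli3, pauli3_mul_pauli2, pauli3_mul_pauli1, pauli1_mul_pauli3, sq,
    kronecker_add, smul_sub, kronecker_sub, kronecker_smul, smul_kronecker]
  module

theorem isHermitian_pauliCommutatorTerm {A₁ A₂ A₃ : Matrix n n ℂ} (hA₁ : A₁.IsHermitian)
    (hA₂ : A₂.IsHermitian) (hA₃ : A₃.IsHermitian) : (pauliCommutatorTerm A₁ A₂ A₃).IsHermitian :=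
  ((isHermitian_pauli1.kronecker (hA₂.I_smul_lie hA₃)).add
    (isHermitian_pauli2.kronecker (hA₃.I_smul_lie hA₁))).add
    (isHermitian_pauli3.kronecker (hA₁.I_smul_lie hA₂))

theorem norm_pauliCommutatorTerm_le [DecidableEq n] (A₁ A₂ A₃ : Matrix n n ℂ) :
    ‖pauliCommutatorTerm A₁ A₂ A₃‖ ≤ ‖⁅A₁, A₂⁆‖ + ‖⁅A₂, A₃⁆‖ + ‖⁅A₃, A₁⁆‖ := by
  have term_le {σ : Matrix (Fin 2) (Fin 2) ℂ} (hσ : σ.IsHermitian) (hσσ : σ * σ = 1)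
      (C : Matrix n n ℂ) : ‖σ ⊗ₖ (Complex.I • C)‖ ≤ ‖C‖ := by
    simpa [norm_eq_one_of_isHermitian_of_mul_self_eq_one hσ hσσ, norm_smul] using
      norm_kronecker_le σ (Complex.I • C)
  refine norm_add₃_le.trans ?_
  linarith [term_le isHermitian_pauli1 pauli1_mul_self ⁅A₂, A₃⁆,
    term_le isHermitian_pauli2 pauli2_mul_self ⁅A₃, A₁⁆,
    term_le isHermitian_pauli3 pauli3_mul_self ⁅A₁, A₂⁆]

end PauliKronecker

theorem localizer_mul_self {N : ℕ} (A₁ A₂ A₃ : Matrix (Fin N) (Fin N) ℂ) (lam : Fin 3 → ℝ) :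
    localizer A₁ A₂ A₃ lam * localizer A₁ A₂ A₃ lam
      = 1 ⊗ₖ ((A₁ - (lam 0 : ℂ) • 1) ^ 2 + (A₂ - (lam 1 : ℂ) • 1) ^ 2
          + (A₃ - (lam 2 : ℂ) • 1) ^ 2) + pauliCommutatorTerm A₁ A₂ A₃ := by
  rw [localizer, pauli_kronecker_sum_mul_self, pauliCommutatorTerm, pauliCommutatorTerm,
    lie_sub_smul_one, lie_sub_smul_one, lie_sub_smul_one]

theorem localizer_sq_eigenvalue_lower_bound_general {N : ℕ}
    (A₁ A₂ A₃ : Matrix (Fin N) (Fin N) ℂ)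
    (hA₁ : A₁.IsHermitian) (hA₂ : A₂.IsHermitian) (hA₃ : A₃.IsHermitian)
    (lam : Fin 3 → ℝ) :
    ∀ (c : ℝ) (u : Fin 2 × Fin N → ℂ), u ≠ 0 →
      (localizer A₁ A₂ A₃ lam * localizer A₁ A₂ A₃ lam).mulVec u = (c : ℂ) • u →
      sInf {c' : ℝ | ∃ v : Fin N → ℂ, v ≠ 0 ∧
          ((A₁ - (lam 0 : ℂ) • 1) ^ 2 + (A₂ - (lam 1 : ℂ) • 1) ^ 2
            + (A₃ - (lam 2 : ℂ) • 1) ^ 2).mulVec v = (c' : ℂ) • v}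
        - (‖⁅A₁, A₂⁆‖ + ‖⁅A₂, A₃⁆‖ + ‖⁅A₃, A₁⁆‖) ≤ c := by
  intro c u hu hc
  rw [localizer_mul_self] at hc
  have hB : ((A₁ - (lam 0 : ℂ) • 1) ^ 2 + (A₂ - (lam 1 : ℂ) • 1) ^ 2
      + (A₃ - (lam 2 : ℂ) • 1) ^ 2).IsHermitian :=
    (((hA₁.sub_ofReal_smul_one _).pow 2).add ((hA₂.sub_ofReal_smul_one _).pow 2)).add
      ((hA₃.sub_ofReal_smul_one _).pow 2)
  have hc_ge := sub_norm_le_of_mem_spectrum_add (isHermitian_one.kronecker hB).isSelfAdjoint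
    (isHermitian_pauliCommutatorTerm hA₁ hA₂ hA₃)
    (algebraMap_le_one_kronecker hB.algebraMap_sInf_le) (mem_spectrum_real_of_mulVec_eq_smul hu hc)
  linarith [norm_pauliCommutatorTerm_le A₁ A₂ A₃]

/-- Every eigenvalue of `L_λ²` is bounded below by the smallest eigenvalue of
`(A₁-λ₁)² + (A₂-λ₂)² + (A₃-λ₃)²` minus the sum of the commutator norms. -/
theorem localizer_sq_eigenvalue_lower_bound {N : ℕ} (hN : 0 < N)
    (A₁ A₂ A₃ : Matrix (Fin N) (Fin N) ℂ)
    (hA₁ : A₁.IsHermitian) (hA₂ : A₂.IsHermitian) (hA₃ : A₃.IsHermitian)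
    (lam : Fin 3 → ℝ) :
    ∀ (c : ℝ) (u : Fin 2 × Fin N → ℂ), u ≠ 0 →
      (localizer A₁ A₂ A₃ lam * localizer A₁ A₂ A₃ lam).mulVec u = (c : ℂ) • u →
      sInf {c' : ℝ | ∃ v : Fin N → ℂ, v ≠ 0 ∧
          ((A₁ - (lam 0 : ℂ) • 1) ^ 2 + (A₂ - (lam 1 : ℂ) • 1) ^ 2
            + (A₃ - (lam 2 : ℂ) • 1) ^ 2).mulVec v = (c' : ℂ) • v}
        - (‖⁅A₁, A₂⁆‖ + ‖⁅A₂, A₃⁆‖ + ‖⁅A₃, A₁⁆‖) ≤ c :=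
  localizer_sq_eigenvalue_lower_bound_general A₁ A₂ A₃ hA₁ hA₂ hA₃ lam
end
end
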